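/- (Theorem 1, boundedness of sequence, part (i).) Under Assumption A, the gap between consecutive iterates converges to zero: x^{t+1} − x^t → 0 as t → ∞ (equivalently ‖Δ^{(t)}‖ → 0). -/

import Mathlib

/-!
Because `∇L₁` is `L`-Lipschitz, `L₁` is `(-L)`-strongly convex, so the proximal objective `G_t`
is `(γ - L)`-strongly convex and its minimizer satisfies
`G_t(x^{t+1}) + (γ - L)/2 ‖Δ_t‖² ≤ G_t(x^t)`. Together with the descent lemma for the `L_j`
this makes `𝓛(x^t)` drop by `(ρ + γ - 3L)/2 ‖Δ_t‖²`, up to the error of the stale gradients,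
which is at most `2L (∑_{t-τ ≤ s < t} ‖Δ_s‖) ‖Δ_t‖ ≤ Lδ ∑_{t-τ ≤ s < t} ‖Δ_s‖² + Lτ/δ ‖Δ_t‖²`.
Summed over `t`, each `‖Δ_s‖²` is charged at most `τ` times, and Assumption A is exactly what
makes the net coefficient positive; since `𝓛` is bounded below, `∑ ‖Δ_t‖²` converges.
-/

open scoped RealInnerProductSpace
open Finset Filter Topology

section Convexity

variable {E : Type*} [NormedAddCommGroup E] [NormedSpace ℝ E] {s : Set E} {f g : E → ℝ} {m n : ℝ}

theorem StrongConvexOn.add (hf : StrongConvexOn s m f) (hg : StrongConvexOn s n g) :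
    StrongConvexOn s (m + n) (f + g) :=
  (UniformConvexOn.add hf hg).mono fun r => le_of_eq (by simp only [Pi.add_apply]; ring)

theorem StrongConvexOn.add_convexOn (hf : StrongConvexOn s m f) (hg : ConvexOn ℝ s g) :
    StrongConvexOn s m (f + g) := by
  simpa using hf.add (strongConvexOn_zero.2 hg)

theorem StrongConvexOn.add_sq_norm_sub_le_of_isMinOn {x₀ y : E} (hf : StrongConvexOn s m f)
    (hmin : IsMinOn f s x₀) (hx₀ : x₀ ∈ s) (hy : y ∈ s) :
    f x₀ + m / 2 * ‖y - x₀‖ ^ 2 ≤ f y := by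
  set K := m / 2 * ‖y - x₀‖ ^ 2
  -- compare `f x₀` with `f` on the segment from `x₀` to `y`, then shrink the segment
  have hseg : ∀ a ∈ Set.Ioo (0 : ℝ) 1, f x₀ + (1 - a) * K ≤ f y := by
    rintro a ⟨ha₀, ha₁⟩
    have hconv := hf.2 hy hx₀ ha₀.le (sub_nonneg.2 ha₁.le) (add_sub_cancel a 1)
    have hle := isMinOn_iff.1 hmin _ (hf.1 hy hx₀ ha₀.le (sub_nonneg.2 ha₁.le) (add_sub_cancel a 1))
    simp only [smul_eq_mul] at hconv
    have : a * (f x₀ + (1 - a) * K) ≤ a * f y := by simp only [K]; nlinarith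
    exact le_of_mul_le_mul_left this ha₀
  have hlim : Tendsto (fun a : ℝ => f x₀ + (1 - a) * K) (𝓝[>] 0) (𝓝 (f x₀ + K)) := by
    have : Continuous fun a : ℝ => f x₀ + (1 - a) * K := by fun_prop
    simpa using this.continuousWithinAt.tendsto (x := 0) (s := Set.Ioi 0)
  exact le_of_tendsto hlim (Filter.eventually_of_mem (Ioo_mem_nhdsGT one_pos) hseg)

end Convexity

section Smooth

variable {E : Type*} [NormedAddCommGroup E] [InnerProductSpace ℝ E] [CompleteSpace E]
  {f : E → ℝ} {L : ℝ}

theorem abs_sub_sub_inner_gradient_le (hf : Differentiable ℝ f)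
    (hlip : ∀ u v, ‖gradient f u - gradient f v‖ ≤ L * ‖u - v‖) (x y : E) :
    |f y - f x - ⟪gradient f x, y - x⟫| ≤ L / 2 * ‖y - x‖ ^ 2 := by
  set v := y - x
  have hderiv : ∀ s : ℝ, HasDerivAt (fun s : ℝ => f (x + s • v) - f x - s * ⟪gradient f x, v⟫)
      ⟪gradient f (x + s • v) - gradient f x, v⟫ s := by
    intro s
    have hline : HasDerivAt (fun s : ℝ => x + s • v) v s := by
      simpa using ((hasDerivAt_id s).smul_const v).const_add x
    have hcomp := (hf _).hasGradientAt.hasFDerivAt.comp_hasDerivAt s hline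
    refine ((hcomp.sub_const (f x)).sub ((hasDerivAt_id s).mul_const _)).congr_deriv ?_
    simp [inner_sub_left]
  have hbound : ∀ s ∈ Set.Ico (0 : ℝ) 1,
      ‖⟪gradient f (x + s • v) - gradient f x, v⟫‖ ≤ L * s * ‖v‖ ^ 2 := by
    rintro s ⟨hs, -⟩
    calc ‖⟪gradient f (x + s • v) - gradient f x, v⟫‖
        ≤ ‖gradient f (x + s • v) - gradient f x‖ * ‖v‖ := norm_inner_le_norm _ _
      _ ≤ L * ‖x + s • v - x‖ * ‖v‖ := by gcongr; exact hlip _ _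
      _ = L * s * ‖v‖ ^ 2 := by
        rw [add_sub_cancel_left, norm_smul, Real.norm_of_nonneg hs]; ring
  have hB : ∀ s : ℝ, HasDerivAt (fun s => L / 2 * s ^ 2 * ‖v‖ ^ 2) (L * s * ‖v‖ ^ 2) s := by
    intro s
    refine (((hasDerivAt_pow 2 s).const_mul (L / 2)).mul_const (‖v‖ ^ 2)).congr_deriv ?_
    push_cast; ring
  have := image_norm_le_of_norm_deriv_right_le_deriv_boundary
    (fun s _ => (hderiv s).continuousAt.continuousWithinAt) (fun s _ => (hderiv s).hasDerivWithinAt)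
    (by simp) hB hbound (Set.right_mem_Icc.2 zero_le_one)
  simpa [v] using this

theorem strongConvexOn_neg_of_lipschitz_gradient (hf : Differentiable ℝ f)
    (hlip : ∀ u v, ‖gradient f u - gradient f v‖ ≤ L * ‖u - v‖) :
    StrongConvexOn Set.univ (-L) f := by
  refine ⟨convex_univ, fun x _ y _ a b ha hb hab => ?_⟩
  obtain rfl : b = 1 - a := by linarith
  set z := a • x + (1 - a) • y
  have hx : x - z = (1 - a) • (x - y) := by module
  have hy : y - z = -(a • (x - y)) := by module
  have lower : ∀ w, f z + ⟪gradient f z, w - z⟫ - L / 2 * ‖w - z‖ ^ 2 ≤ f w := fun w => by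
    linarith [neg_abs_le (f w - f z - ⟪gradient f z, w - z⟫),
      abs_sub_sub_inner_gradient_le hf hlip z w]
  have hfx := lower x
  have hfy := lower y
  rw [hx, inner_smul_right, norm_smul, Real.norm_of_nonneg hb] at hfx
  rw [hy, inner_neg_right, inner_smul_right, norm_neg, norm_smul, Real.norm_of_nonneg ha] at hfy
  simp only [smul_eq_mul]
  nlinarith [mul_le_mul_of_nonneg_left hfx ha, mul_le_mul_of_nonneg_left hfy hb]

end Smooth

theorem convexOn_inner_sub {E : Type*} [NormedAddCommGroup E] [InnerProductSpace ℝ E]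
    (w a : E) : ConvexOn ℝ Set.univ fun y => ⟪w, y - a⟫ := by
  have : (fun y => ⟪w, y - a⟫) = ⇑(innerₛₗ ℝ w) + fun _ => -⟪w, a⟫ := by
    ext y; simp [inner_sub_right, ← sub_eq_add_neg]
  exact this ▸ ((innerₛₗ ℝ w).convexOn convex_univ).add_const _

section ProxStep

variable {E : Type*} [NormedAddCommGroup E] [InnerProductSpace ℝ E] [CompleteSpace E]

theorem prox_step_decrease {f g : E → ℝ} {L ρ γ : ℝ} (hf : Differentiable ℝ f)
    (hlip : ∀ u v, ‖gradient f u - gradient f v‖ ≤ L * ‖u - v‖) {a b w : E}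
    (hg : StrongConvexOn Set.univ γ fun y => g y + ρ / 2 * ‖y - a‖ ^ 2)
    (hmin : ∀ y, f b + g b + ρ / 2 * ‖b - a‖ ^ 2 + ⟪w, b - a⟫ ≤
      f y + g y + ρ / 2 * ‖y - a‖ ^ 2 + ⟪w, y - a⟫) :
    f b + g b + ⟪w, b - a⟫ + (ρ + γ - L) / 2 * ‖b - a‖ ^ 2 ≤ f a + g a := by
  set G : E → ℝ := (f + fun y => g y + ρ / 2 * ‖y - a‖ ^ 2) + fun y => ⟪w, y - a⟫
  have hG : StrongConvexOn Set.univ (-L + γ) G :=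
    ((strongConvexOn_neg_of_lipschitz_gradient hf hlip).add hg).add_convexOn
      (convexOn_inner_sub w a)
  have hGmin : IsMinOn G Set.univ b := isMinOn_univ_iff.2 fun y => by
    simp only [G, Pi.add_apply]; linarith [hmin y]
  have := hG.add_sq_norm_sub_le_of_isMinOn hGmin (Set.mem_univ b) (Set.mem_univ a)
  simp only [G, Pi.add_apply, sub_self, norm_zero, inner_zero_right, norm_sub_rev a b] at this
  linarith

end ProxStep

theorem two_mul_sum_mul_le {ι : Type*} (I : Finset ι) (a : ι → ℝ) (b : ℝ) {δ : ℝ} (hδ : 0 < δ) :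
    2 * (∑ i ∈ I, a i) * b ≤ δ * ∑ i ∈ I, a i ^ 2 + #I / δ * b ^ 2 := by
  have hterm : ∀ i ∈ I, 2 * a i * b ≤ δ * a i ^ 2 + b ^ 2 / δ := fun i _ => by
    have : 0 ≤ (δ * a i - b) ^ 2 / δ := by positivity
    have hexp : (δ * a i - b) ^ 2 / δ = δ * a i ^ 2 + b ^ 2 / δ - 2 * a i * b := by
      field_simp; ring
    linarith
  calc 2 * (∑ i ∈ I, a i) * b = ∑ i ∈ I, 2 * a i * b := by rw [mul_sum, sum_mul]
    _ ≤ ∑ i ∈ I, (δ * a i ^ 2 + b ^ 2 / δ) := sum_le_sum hterm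
    _ = δ * ∑ i ∈ I, a i ^ 2 + #I / δ * b ^ 2 := by
      rw [sum_add_distrib, sum_const, nsmul_eq_mul, mul_sum]; ring

theorem sum_range_sum_Ico_sub_le {d : ℕ → ℝ} (hd : ∀ s, 0 ≤ d s) (τ T : ℕ) :
    ∑ t ∈ range T, ∑ s ∈ Ico (t - τ) t, d s ≤ τ * ∑ s ∈ range T, d s := by
  rw [sum_comm' (t' := range T) (s' := fun s => {t ∈ range T | s ∈ Ico (t - τ) t}) (by
    intro t s; simp only [mem_filter, mem_range, mem_Ico]; omega), mul_sum]
  refine sum_le_sum fun s _ => ?_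
  rw [sum_const, nsmul_eq_mul]
  gcongr
  · exact hd s
  calc #{t ∈ range T | s ∈ Ico (t - τ) t} ≤ #(Ioc s (s + τ)) :=
        card_le_card fun t ht => by simp only [mem_filter, mem_range, mem_Ico, mem_Ioc] at ht ⊢; omega
    _ = τ := by simp

theorem summable_of_le_sub_add_sum_Ico {V d : ℕ → ℝ} {B a c : ℝ} {τ : ℕ} (hd : ∀ t, 0 ≤ d t)
    (hV : ∀ t, B ≤ V t) (ha : 0 ≤ a) (hc : a * τ < c)
    (hstep : ∀ t, V (t + 1) ≤ V t - c * d t + a * ∑ s ∈ Ico (t - τ) t, d s) :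
    Summable d := by
  refine summable_of_sum_range_le (c := (V 0 - B) / (c - a * τ)) hd fun T => ?_
  have htel : V T - V 0 ≤ -c * ∑ t ∈ range T, d t + a * (τ * ∑ t ∈ range T, d t) :=
    calc V T - V 0 = ∑ t ∈ range T, (V (t + 1) - V t) := (sum_range_sub V T).symm
      _ ≤ ∑ t ∈ range T, (-c * d t + a * ∑ s ∈ Ico (t - τ) t, d s) :=
        sum_le_sum fun t _ => by linarith [hstep t]
      _ = -c * ∑ t ∈ range T, d t + a * ∑ t ∈ range T, ∑ s ∈ Ico (t - τ) t, d s := by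
        rw [sum_add_distrib, mul_sum, mul_sum]
      _ ≤ -c * ∑ t ∈ range T, d t + a * (τ * ∑ t ∈ range T, d t) := by
        gcongr; exact sum_range_sum_Ico_sub_le hd τ T
  rw [le_div_iff₀ (sub_pos.2 hc)]
  nlinarith [hV T]

theorem norm_sub_le_sum_Ico_norm_sub {E : Type*} [SeminormedAddCommGroup E] (x : ℕ → E)
    {t τ k : ℕ} (hk : t - τ ≤ k) (hkt : k ≤ t) :
    ‖x t - x k‖ ≤ ∑ s ∈ Ico (t - τ) t, ‖x (s + 1) - x s‖ :=
  calc ‖x t - x k‖ = dist (x k) (x t) := (dist_eq_norm' _ _).symm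
    _ ≤ ∑ s ∈ Ico k t, dist (x s) (x (s + 1)) := dist_le_Ico_sum_dist x hkt
    _ = ∑ s ∈ Ico k t, ‖x (s + 1) - x s‖ := by simp_rw [dist_eq_norm']
    _ ≤ ∑ s ∈ Ico (t - τ) t, ‖x (s + 1) - x s‖ :=
      sum_le_sum_of_subset_of_nonneg (Ico_subset_Ico_left hk) fun _ _ _ => norm_nonneg _

theorem norm_avg_sub_sub_avg_sub_le {E : Type*} [SeminormedAddCommGroup E] [NormedSpace ℝ E]
    {m : ℕ} {G : Fin m → E → E} {L S : ℝ} (hL : 0 ≤ L)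
    (hG : ∀ j u v, ‖G j u - G j v‖ ≤ L * ‖u - v‖) (j₀ : Fin m) {y : E} {z : Fin m → E}
    (hz : ∀ j, ‖y - z j‖ ≤ S) :
    ‖((m : ℝ)⁻¹ • ∑ j, G j y - G j₀ y) - ((m : ℝ)⁻¹ • ∑ j, G j (z j) - G j₀ (z j₀))‖
      ≤ 2 * L * S := by
  have hm : (0 : ℝ) < m := by exact_mod_cast j₀.pos
  have hj : ∀ j, ‖G j y - G j (z j)‖ ≤ L * S := fun j =>
    (hG j _ _).trans (mul_le_mul_of_nonneg_left (hz j) hL)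
  calc _ = ‖(m : ℝ)⁻¹ • ∑ j, (G j y - G j (z j)) - (G j₀ y - G j₀ (z j₀))‖ := by
        rw [sum_sub_distrib, smul_sub]; congr 1; abel
    _ ≤ (m : ℝ)⁻¹ * ∑ j, ‖G j y - G j (z j)‖ + ‖G j₀ y - G j₀ (z j₀)‖ := by
        refine (norm_sub_le _ _).trans (add_le_add_left ?_ _)
        rw [norm_smul, Real.norm_of_nonneg (by positivity)]
        exact mul_le_mul_of_nonneg_left (norm_sum_le _ _) (by positivity)
    _ ≤ (m : ℝ)⁻¹ * ∑ _j : Fin m, L * S + L * S := by gcongr with j _ <;> exact hj _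
    _ = 2 * L * S := by
        rw [sum_const, card_univ, Fintype.card_fin, nsmul_eq_mul, inv_mul_cancel_left₀ hm.ne']
        ring

section DelayedProx

variable {E : Type*} [NormedAddCommGroup E] [InnerProductSpace ℝ E] [CompleteSpace E] {m : ℕ}

theorem avg_add_le_of_prox_step {Lf : Fin m → E → ℝ} {L ρ γ : ℝ}
    (hdiff : ∀ j, Differentiable ℝ (Lf j))
    (hlip : ∀ j u v, ‖gradient (Lf j) u - gradient (Lf j) v‖ ≤ L * ‖u - v‖)
    (j₀ : Fin m) {h : E → ℝ} {a b w : E}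
    (hstep : Lf j₀ b + h b + ⟪w, b - a⟫ + (ρ + γ - L) / 2 * ‖b - a‖ ^ 2 ≤ Lf j₀ a + h a) :
    (m : ℝ)⁻¹ * ∑ j, Lf j b + h b ≤ (m : ℝ)⁻¹ * ∑ j, Lf j a + h a
      - (ρ + γ - 3 * L) / 2 * ‖b - a‖ ^ 2
      + ⟪((m : ℝ)⁻¹ • ∑ j, gradient (Lf j) a - gradient (Lf j₀) a) - w, b - a⟫ := by
  have hm : (0 : ℝ) < m := by exact_mod_cast j₀.pos
  have hres := fun j => abs_sub_sub_inner_gradient_le (hdiff j) (hlip j) a b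
  have havg : (m : ℝ)⁻¹ * ∑ j, Lf j b - (m : ℝ)⁻¹ * ∑ j, Lf j a
      - ⟪(m : ℝ)⁻¹ • ∑ j, gradient (Lf j) a, b - a⟫ ≤ L / 2 * ‖b - a‖ ^ 2 :=
    calc _ = (m : ℝ)⁻¹ * ∑ j, (Lf j b - Lf j a - ⟪gradient (Lf j) a, b - a⟫) := by
          rw [inner_smul_left, sum_inner, sum_sub_distrib, sum_sub_distrib]; simp; ring
      _ ≤ (m : ℝ)⁻¹ * ∑ _j : Fin m, L / 2 * ‖b - a‖ ^ 2 := by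
          gcongr with j; exact (le_abs_self _).trans (hres j)
      _ = L / 2 * ‖b - a‖ ^ 2 := by
          rw [sum_const, card_univ, Fintype.card_fin, nsmul_eq_mul, inv_mul_cancel_left₀ hm.ne']
  have hj₀ := neg_abs_le (Lf j₀ b - Lf j₀ a - ⟪gradient (Lf j₀) a, b - a⟫)
  rw [inner_sub_left, inner_sub_left]
  linarith [hres j₀]

theorem delayed_prox_step {Lf : Fin m → E → ℝ} {h : E → ℝ} {τ : ℕ} {L ρ γ δ : ℝ}
    (hL : 0 ≤ L) (hδ : 0 < δ) (hdiff : ∀ j, Differentiable ℝ (Lf j))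
    (hlip : ∀ j u v, ‖gradient (Lf j) u - gradient (Lf j) v‖ ≤ L * ‖u - v‖)
    (hstrong : ∀ z, StrongConvexOn Set.univ γ fun y => h y + ρ / 2 * ‖y - z‖ ^ 2)
    (j₀ : Fin m) {x : ℕ → E} {t : ℕ} {k : Fin m → ℕ} (hk : ∀ j, t - τ ≤ k j ∧ k j ≤ t)
    (hupdate : ∀ y, Lf j₀ (x (t + 1)) + h (x (t + 1)) + ρ / 2 * ‖x (t + 1) - x t‖ ^ 2 +
          ⟪((m : ℝ)⁻¹ • ∑ j, gradient (Lf j) (x (k j))) - gradient (Lf j₀) (x (k j₀)),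
            x (t + 1) - x t⟫ ≤
        Lf j₀ y + h y + ρ / 2 * ‖y - x t‖ ^ 2 +
          ⟪((m : ℝ)⁻¹ • ∑ j, gradient (Lf j) (x (k j))) - gradient (Lf j₀) (x (k j₀)), y - x t⟫) :
    (m : ℝ)⁻¹ * ∑ j, Lf j (x (t + 1)) + h (x (t + 1)) ≤ (m : ℝ)⁻¹ * ∑ j, Lf j (x t) + h (x t)
      - ((ρ + γ - 3 * L) / 2 - L * τ / δ) * ‖x (t + 1) - x t‖ ^ 2
      + L * δ * ∑ s ∈ Ico (t - τ) t, ‖x (s + 1) - x s‖ ^ 2 := by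
  set Δ := x (t + 1) - x t
  set S := ∑ s ∈ Ico (t - τ) t, ‖x (s + 1) - x s‖
  have hdescent := avg_add_le_of_prox_step hdiff hlip j₀
    (prox_step_decrease (hdiff j₀) (hlip j₀) (hstrong (x t)) hupdate)
  have herr := norm_avg_sub_sub_avg_sub_le hL hlip j₀ (y := x t) (z := fun j => x (k j))
    fun j => norm_sub_le_sum_Ico_norm_sub x (hk j).1 (hk j).2
  have hcard : (#(Ico (t - τ) t) : ℝ) ≤ τ := by
    rw [Nat.card_Ico]; exact_mod_cast (by omega : t - (t - τ) ≤ τ)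
  have hcross : ⟪((m : ℝ)⁻¹ • ∑ j, gradient (Lf j) (x t) - gradient (Lf j₀) (x t))
      - ((m : ℝ)⁻¹ • ∑ j, gradient (Lf j) (x (k j)) - gradient (Lf j₀) (x (k j₀))), Δ⟫
      ≤ L * δ * ∑ s ∈ Ico (t - τ) t, ‖x (s + 1) - x s‖ ^ 2 + L * τ / δ * ‖Δ‖ ^ 2 :=
    calc _ ≤ 2 * L * S * ‖Δ‖ := (real_inner_le_norm _ _).trans (by gcongr)
      _ = L * (2 * S * ‖Δ‖) := by ring
      _ ≤ L * (δ * ∑ s ∈ Ico (t - τ) t, ‖x (s + 1) - x s‖ ^ 2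
            + #(Ico (t - τ) t) / δ * ‖Δ‖ ^ 2) := by gcongr; exact two_mul_sum_mul_le _ _ _ hδ
      _ ≤ L * (δ * ∑ s ∈ Ico (t - τ) t, ‖x (s + 1) - x s‖ ^ 2 + τ / δ * ‖Δ‖ ^ 2) := by gcongr
      _ = _ := by ring
  linarith

end DelayedProx

theorem stmt_6_general
    {p m τ : ℕ} (hm : 0 < m)
    {L ρ γ : ℝ}
    (hL : 0 < L)
    (Lf : Fin m → EuclideanSpace ℝ (Fin p) → ℝ)
    (hdiff : ∀ j, Differentiable ℝ (Lf j))
    (hlip : ∀ j (u v : EuclideanSpace ℝ (Fin p)), ‖gradient (Lf j) u - gradient (Lf j) v‖ ≤ L * ‖u - v‖)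
    (h : EuclideanSpace ℝ (Fin p) → ℝ)
    (hstrong : ∀ z : EuclideanSpace ℝ (Fin p), StrongConvexOn Set.univ γ (fun y => h y + ρ / 2 * ‖y - z‖ ^ 2))
    (tj : ℕ → Fin m → ℕ)
    (htj : ∀ t j, t - τ ≤ tj t j ∧ tj t j ≤ t)
    (x : ℕ → EuclideanSpace ℝ (Fin p))
    (hupdate : ∀ t, ∀ y : EuclideanSpace ℝ (Fin p),
      Lf ⟨0, hm⟩ (x (t + 1)) + h (x (t + 1)) + ρ / 2 * ‖x (t + 1) - x t‖ ^ 2 +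
          ⟪((m : ℝ)⁻¹ • ∑ j, gradient (Lf j) (x (tj t j))) - gradient (Lf ⟨0, hm⟩) (x (tj t ⟨0, hm⟩)), x (t + 1) - x t⟫ ≤
        Lf ⟨0, hm⟩ y + h y + ρ / 2 * ‖y - x t‖ ^ 2 +
          ⟪((m : ℝ)⁻¹ • ∑ j, gradient (Lf j) (x (tj t j))) - gradient (Lf ⟨0, hm⟩) (x (tj t ⟨0, hm⟩)), y - x t⟫)
    (δ : ℝ) (hδ : 0 < δ)
    (hA1 : 3 * L + 2 * L * δ * τ < γ)
    (hA2 : 2 * L * τ / δ < ρ)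
    (Llo : ℝ) (hLlo : ∀ y : EuclideanSpace ℝ (Fin p), Llo < (((m : ℝ)⁻¹ * ∑ j, Lf j (y)) + h (y)))
    :
    Filter.Tendsto (fun t => x (t + 1) - x t) Filter.atTop (nhds 0) := by
  have hstep := fun t => delayed_prox_step hL.le hδ hdiff hlip hstrong ⟨0, hm⟩ (htj t) (hupdate t)
  have hrate : L * δ * τ < (ρ + γ - 3 * L) / 2 - L * τ / δ := by
    rw [mul_div_assoc] at hA2 ⊢
    linarith
  have hsum : Summable fun t => ‖x (t + 1) - x t‖ ^ 2 :=
    summable_of_le_sub_add_sum_Ico (fun t => sq_nonneg _) (fun t => (hLlo (x t)).le)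
      (by positivity) hrate hstep
  have hsq := hsum.tendsto_atTop_zero
  rw [tendsto_zero_iff_norm_tendsto_zero]
  simpa using hsq.sqrt

theorem stmt_6
    {p m τ : ℕ} (hp : 1 ≤ p) (hm : 0 < m)
    {L ρ γ : ℝ}
    (hL : 0 < L) (hρ : 0 < ρ) (hγ : 0 < γ)
    (Lf : Fin m → EuclideanSpace ℝ (Fin p) → ℝ)
    (hdiff : ∀ j, Differentiable ℝ (Lf j))
    (hlip : ∀ j (u v : EuclideanSpace ℝ (Fin p)), ‖gradient (Lf j) u - gradient (Lf j) v‖ ≤ L * ‖u - v‖)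
    (h : EuclideanSpace ℝ (Fin p) → ℝ)
    (hconv : ConvexOn ℝ Set.univ h)
    (hstrong : ∀ z : EuclideanSpace ℝ (Fin p), StrongConvexOn Set.univ γ (fun y => h y + ρ / 2 * ‖y - z‖ ^ 2))
    (tj : ℕ → Fin m → ℕ)
    (htj : ∀ t j, t - τ ≤ tj t j ∧ tj t j ≤ t)
    (x : ℕ → EuclideanSpace ℝ (Fin p))
    (hupdate : ∀ t, ∀ y : EuclideanSpace ℝ (Fin p),
      Lf ⟨0, hm⟩ (x (t + 1)) + h (x (t + 1)) + ρ / 2 * ‖x (t + 1) - x t‖ ^ 2 +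
          ⟪((m : ℝ)⁻¹ • ∑ j, gradient (Lf j) (x (tj t j))) - gradient (Lf ⟨0, hm⟩) (x (tj t ⟨0, hm⟩)), x (t + 1) - x t⟫ ≤
        Lf ⟨0, hm⟩ y + h y + ρ / 2 * ‖y - x t‖ ^ 2 +
          ⟪((m : ℝ)⁻¹ • ∑ j, gradient (Lf j) (x (tj t j))) - gradient (Lf ⟨0, hm⟩) (x (tj t ⟨0, hm⟩)), y - x t⟫)
    (δ : ℝ) (hδ : 0 < δ)
    (hA1 : 3 * L + 2 * L * δ * τ < γ)
    (hA2 : 2 * L * τ / δ < ρ)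
    (Llo : ℝ) (hLlo : ∀ y : EuclideanSpace ℝ (Fin p), Llo < (((m : ℝ)⁻¹ * ∑ j, Lf j (y)) + h (y)))
    :
    Filter.Tendsto (fun t => x (t + 1) - x t) Filter.atTop (nhds 0) :=
  stmt_6_general hm hL Lf hdiff hlip h hstrong tj htj x hupdate δ hδ hA1 hA2 Llo hLlo
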